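/- Let G = (V,E) be a finite simple undirected graph and let ν̄ᴿ_G denote the optimal value of the linear programming relaxation Pᴿ_G: maximize Σ_{i∈V}(x_i - y_i) over real vectors x, y : V → ℝ subject to x_i + x_j ≤ 1 for each edge ij ∈ E, y_j ≥ x_i and y_i ≥ x_j for each edge ij ∈ E, Σ_{i∈V} x_i ≥ 1, and x_i ≥ 0, y_i ≥ 0 for each i ∈ V. If ν̄ᴿ_G > 0, then ν̄ᴿ_G = ν̄_G; in particular, the maximum of the relaxation is attained at a 0-1 point and there exists a nonempty independent set S with v_G(S) = ν̄ᴿ_G. -/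

import Mathlib

open Finset

variable {V : Type*}

/-- `N(T)`: the set of vertices adjacent to at least one vertex of `T`. -/
def nbhd [Fintype V] [DecidableEq V] (G : SimpleGraph V) [DecidableRel G.Adj]
    (T : Finset V) : Finset V :=
  Finset.univ.filter fun j => ∃ i ∈ T, G.Adj i j

/-- The vulnerability function `v_G(T) = |T| - |N(T)|`. -/
def vuln [Fintype V] [DecidableEq V] (G : SimpleGraph V) [DecidableRel G.Adj]
    (T : Finset V) : ℤ :=
  (T.card : ℤ) - ((nbhd G T).card : ℤ)

/-- `S` is an independent set of `G`. -/
def IsIndepF (G : SimpleGraph V) (S : Finset V) : Prop :=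
  ∀ i ∈ S, ∀ j ∈ S, ¬ G.Adj i j

/-- `(x, y)` is a feasible solution of the linear relaxation `Pᴿ_G`:
`x_i + x_j ≤ 1` for each edge `ij`, `y_j ≥ x_i` and `y_i ≥ x_j` for each edge `ij`,
`Σ_i x_i ≥ 1`, and `x, y ≥ 0`. -/
def LPFeasible [Fintype V] (G : SimpleGraph V) (x y : V → ℝ) : Prop :=
  (∀ i j, G.Adj i j → x i + x j ≤ 1) ∧
  (∀ i j, G.Adj i j → x i ≤ y j) ∧
  (1 ≤ ∑ i, x i) ∧ (∀ i, 0 ≤ x i) ∧ (∀ i, 0 ≤ y i)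

/-! Threshold rounding. For an optimal `(x, y)` every vertex has a neighbour (otherwise its
`x`-value could be raised without bound), so `0 ≤ x ≤ 1`, and capping `y` at `1` only
increases the objective. For `θ ∈ (0, 1)` the level set `A_θ = {i | θ < x i}` satisfies
`N(A_θ) ⊆ B_θ = {j | θ < y j}`, so `|A_θ| - |B_θ| ≤ v_G(A_θ)`, and by Zhang's lemma
(`A \ N(A)` is independent with `v_G(A \ N(A)) ≥ v_G(A)`) this is at most `max 0 ν̄_G`.
Integrating over `θ ∈ (0, 1)` gives `ν̄ᴿ_G ≤ max 0 ν̄_G`, while each nonempty independent set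
`S` yields the 0-1 feasible point `(1_S, 1_{N(S)})` of value `v_G(S)`. -/

section Vulnerability

variable [Fintype V] [DecidableEq V] (G : SimpleGraph V) [DecidableRel G.Adj]

@[simp]
lemma mem_nbhd {T : Finset V} {j : V} : j ∈ nbhd G T ↔ ∃ i ∈ T, G.Adj i j := by
  simp [nbhd]

lemma isIndepF_sdiff_nbhd (T : Finset V) : IsIndepF G (T \ nbhd G T) := by
  intro i hi j hj hij
  exact (mem_sdiff.mp hi).2 ((mem_nbhd G).mpr ⟨j, (mem_sdiff.mp hj).1, hij.symm⟩)

lemma nbhd_sdiff_nbhd_subset (T : Finset V) : nbhd G (T \ nbhd G T) ⊆ nbhd G T \ T := by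
  intro j hj
  obtain ⟨i, hi, hij⟩ := (mem_nbhd G).mp hj
  refine mem_sdiff.mpr ⟨(mem_nbhd G).mpr ⟨i, (mem_sdiff.mp hi).1, hij⟩, fun hjT => ?_⟩
  exact (mem_sdiff.mp hi).2 ((mem_nbhd G).mpr ⟨j, hjT, hij.symm⟩)

lemma vuln_le_vuln_sdiff_nbhd (T : Finset V) : vuln G T ≤ vuln G (T \ nbhd G T) := by
  have hT := card_sdiff_add_card_inter T (nbhd G T)
  have hN := card_sdiff_add_card_inter (nbhd G T) T
  have hS := card_le_card (nbhd_sdiff_nbhd_subset G T)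
  rw [inter_comm] at hN
  unfold vuln
  omega

lemma exists_isIndepF_vuln_le {T : Finset V} (hT : 0 < vuln G T) :
    ∃ S : Finset V, S.Nonempty ∧ IsIndepF G S ∧ vuln G T ≤ vuln G S := by
  have hle := vuln_le_vuln_sdiff_nbhd G T
  refine ⟨T \ nbhd G T, ?_, isIndepF_sdiff_nbhd G T, hle⟩
  rw [← card_pos]
  unfold vuln at hT hle
  omega

lemma card_sub_card_le_of_nbhd_subset {c : ℝ} (hc : 0 ≤ c)
    (hbound : ∀ S : Finset V, S.Nonempty → IsIndepF G S → (vuln G S : ℝ) ≤ c)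
    {T U : Finset V} (hTU : nbhd G T ⊆ U) : (#T : ℝ) - #U ≤ c := by
  have hTv : (#T : ℝ) - #U ≤ vuln G T := by
    have := card_le_card hTU
    unfold vuln
    push_cast
    gcongr
  rcases le_or_gt (vuln G T) 0 with hT | hT
  · exact hTv.trans ((Int.cast_nonpos.mpr hT).trans hc)
  · obtain ⟨S, hSne, hSind, hTS⟩ := exists_isIndepF_vuln_le G hT
    exact hTv.trans ((Int.cast_le.mpr hTS).trans (hbound S hSne hSind))

end Vulnerability

section Rounding

open MeasureTheory Set

lemma integral_indicator_Iio_Ioo_zero_one {a : ℝ} (ha : 0 ≤ a) :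
    ∫ θ in Ioo (0 : ℝ) 1, (Iio a).indicator 1 θ = min 1 a := by
  rw [integral_indicator_one measurableSet_Iio, measureReal_restrict_apply measurableSet_Iio,
    inter_comm, Ioo_inter_Iio, Real.volume_real_Ioo_of_le (le_min zero_le_one ha), sub_zero]

lemma integrableOn_indicator_Iio_Ioo_zero_one (a : ℝ) :
    IntegrableOn ((Iio a).indicator (1 : ℝ → ℝ)) (Ioo (0 : ℝ) 1) :=
  (integrable_const (1 : ℝ)).indicator measurableSet_Iio

lemma sum_indicator_Iio_eq_card [Fintype V] (a : V → ℝ) (θ : ℝ) :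
    ∑ i, (Iio (a i)).indicator (1 : ℝ → ℝ) θ = #(univ.filter fun i => θ < a i) := by
  simp only [indicator_apply, Set.mem_Iio, Pi.one_apply, sum_boole]

variable [Fintype V] [DecidableEq V] (G : SimpleGraph V) [DecidableRel G.Adj]

lemma sum_sub_le_of_forall_vuln_le {x y : V → ℝ} (hx0 : ∀ i, 0 ≤ x i) (hx1 : ∀ i, x i ≤ 1)
    (hy0 : ∀ i, 0 ≤ y i) (hxy : ∀ i j, G.Adj i j → x i ≤ y j) {c : ℝ} (hc : 0 ≤ c)
    (hbound : ∀ S : Finset V, S.Nonempty → IsIndepF G S → (vuln G S : ℝ) ≤ c) :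
    ∑ i, (x i - y i) ≤ c := by
  set F : V → ℝ → ℝ := fun i θ => (Iio (x i)).indicator 1 θ - (Iio (y i)).indicator 1 θ
  have hF : ∀ i, IntegrableOn (F i) (Ioo 0 1) := fun i =>
    (integrableOn_indicator_Iio_Ioo_zero_one _).sub (integrableOn_indicator_Iio_Ioo_zero_one _)
  have hlevel : ∀ θ, ∑ i, F i θ ≤ c := by
    intro θ
    simp only [F, sum_sub_distrib, sum_indicator_Iio_eq_card]
    refine card_sub_card_le_of_nbhd_subset G hc hbound fun j hj => ?_
    obtain ⟨i, hi, hij⟩ := (mem_nbhd G).mp hj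
    simp only [mem_filter, Finset.mem_univ, true_and] at hi ⊢
    exact hi.trans_le (hxy i j hij)
  calc ∑ i, (x i - y i) ≤ ∑ i, (min 1 (x i) - min 1 (y i)) := by
        gcongr with i
        · exact (min_eq_right (hx1 i)).ge
        · exact min_le_right _ _
    _ = ∫ θ in Ioo 0 1, ∑ i, F i θ := by
        rw [integral_finsetSum _ fun i _ => hF i]
        refine sum_congr rfl fun i _ => ?_
        simp only [F]
        rw [integral_sub (integrableOn_indicator_Iio_Ioo_zero_one _)
          (integrableOn_indicator_Iio_Ioo_zero_one _), integral_indicator_Iio_Ioo_zero_one (hx0 i),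
          integral_indicator_Iio_Ioo_zero_one (hy0 i)]
    _ ≤ ∫ _ in Ioo (0 : ℝ) 1, c :=
        setIntegral_mono_on (integrable_finsetSum _ fun i _ => hF i) (integrable_const c)
          measurableSet_Ioo fun θ _ => hlevel θ
    _ = c := by simp [Real.volume_real_Ioo_of_le zero_le_one]

end Rounding

section LinearProgram

variable [Fintype V] {G : SimpleGraph V}

lemma LPFeasible.le_one {x y : V → ℝ} (h : LPFeasible G x y) {i j : V} (hij : G.Adj i j) :
    x i ≤ 1 := by
  linarith [h.1 i j hij, h.2.2.2.1 j]

lemma LPFeasible.add_single_of_isolated [DecidableEq V] {x y : V → ℝ} (h : LPFeasible G x y)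
    {v : V} (hv : ∀ j, ¬ G.Adj v j) {t : ℝ} (ht : 0 ≤ t) :
    LPFeasible G (x + Pi.single v t) y := by
  obtain ⟨hedge, hxy, hsum, hx0, hy0⟩ := h
  have hsingle : 0 ≤ Pi.single (M := fun _ => ℝ) v t := Pi.single_nonneg.mpr ht
  have hne : ∀ i j, G.Adj i j → i ≠ v := fun i j hij hi => hv j (hi ▸ hij)
  refine ⟨fun i j hij => ?_, fun i j hij => ?_, ?_, fun i => ?_, hy0⟩
  · simpa [hne i j hij, hne j i hij.symm] using hedge i j hij
  · simpa [hne i j hij] using hxy i j hij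
  · simp only [Pi.add_apply, sum_add_distrib]
    linarith [sum_nonneg fun i (_ : i ∈ univ) => hsingle i]
  · simpa using add_nonneg (hx0 i) (hsingle i)

lemma exists_adj_of_bddAbove
    (hbdd : BddAbove {r : ℝ | ∃ x y : V → ℝ, LPFeasible G x y ∧ ∑ i, (x i - y i) = r})
    {x y : V → ℝ} (h : LPFeasible G x y) (v : V) : ∃ j, G.Adj v j := by
  classical
  by_contra! hv
  obtain ⟨M, hM⟩ := hbdd
  have hle : ∑ i, (x i - y i) ≤ M := hM ⟨x, y, h, rfl⟩
  set t := M - ∑ i, (x i - y i) + 1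
  have hbump := hM ⟨_, _, h.add_single_of_isolated hv (t := t) (by linarith), rfl⟩
  simp only [Pi.add_apply, add_sub_right_comm, sum_add_distrib, sum_pi_single',
    mem_univ, if_true] at hbump
  linarith

variable [DecidableEq V] (G) [DecidableRel G.Adj]

lemma lpFeasible_indicator {S : Finset V} (hne : S.Nonempty) (hind : IsIndepF G S) :
    LPFeasible G (fun i => if i ∈ S then 1 else 0) (fun i => if i ∈ nbhd G S then 1 else 0) := by
  refine ⟨fun i j hij => ?_, fun i j hij => ?_, ?_, fun i => ?_, fun i => ?_⟩
  · by_cases hi : i ∈ S <;> by_cases hj : j ∈ S <;> simp [hi, hj]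
    exact absurd hij (hind i hi j hj)
  · by_cases hi : i ∈ S
    · simp [hi, (mem_nbhd G).mpr ⟨i, hi, hij⟩]
    · simp only [hi, if_false]; split_ifs <;> norm_num
  · simpa [sum_boole, filter_mem_eq_inter] using hne
  all_goals dsimp only; split_ifs <;> norm_num

lemma sum_indicator_sub_indicator_nbhd (S : Finset V) :
    ∑ i, ((if i ∈ S then 1 else 0) - (if i ∈ nbhd G S then 1 else 0) : ℝ) = vuln G S := by
  simp [sum_sub_distrib, sum_boole, vuln, nbhd]

end LinearProgram

/-- Let `ν̄ᴿ_G` be the optimal value of the linear programming relaxation `Pᴿ_G`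
(maximizing `Σ_i (x_i - y_i)` over feasible `(x, y)`). If `ν̄ᴿ_G > 0`, then
`ν̄ᴿ_G = ν̄_G`; in particular, the maximum of the relaxation is attained at a 0-1 point and
there exists a nonempty independent set `S` with `v_G(S) = ν̄ᴿ_G`. -/
theorem lpRelaxation_optimal_eq_vulnerability_of_pos
    [Fintype V] [DecidableEq V] (G : SimpleGraph V) [DecidableRel G.Adj]
    (nuR : ℝ) (nuBar : ℤ)
    (hR : IsGreatest {r : ℝ | ∃ x y : V → ℝ, LPFeasible G x y ∧ ∑ i, (x i - y i) = r} nuR)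
    (hBar : IsGreatest {z : ℤ | ∃ S : Finset V, S.Nonempty ∧ IsIndepF G S ∧ vuln G S = z} nuBar)
    (hpos : 0 < nuR) :
    nuR = (nuBar : ℝ) ∧
      (∃ x y : V → ℝ, LPFeasible G x y ∧
        (∀ i, (x i = 0 ∨ x i = 1) ∧ (y i = 0 ∨ y i = 1)) ∧ ∑ i, (x i - y i) = nuR) ∧
      (∃ S : Finset V, S.Nonempty ∧ IsIndepF G S ∧ (vuln G S : ℝ) = nuR) := by
  obtain ⟨S, hSne, hSind, hSv⟩ := hBar.1
  have hSval := sum_indicator_sub_indicator_nbhd G S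
  rw [hSv] at hSval
  have hle : (nuBar : ℝ) ≤ nuR := hR.2 ⟨_, _, lpFeasible_indicator G hSne hSind, hSval⟩
  obtain ⟨x, y, hfeas, hobj⟩ := hR.1
  have hx1 : ∀ i, x i ≤ 1 := fun i =>
    let ⟨_, hij⟩ := exists_adj_of_bddAbove hR.bddAbove hfeas i
    hfeas.le_one hij
  have hge : nuR ≤ max 0 (nuBar : ℝ) := hobj ▸
    sum_sub_le_of_forall_vuln_le G hfeas.2.2.2.1 hx1 hfeas.2.2.2.2 hfeas.2.1 (le_max_left _ _)
      fun T hT hTind => (Int.cast_le.mpr (hBar.2 ⟨T, hT, hTind, rfl⟩)).trans (le_max_right _ _)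
  have heq : nuR = nuBar :=
    le_antisymm ((le_max_iff.mp hge).resolve_left (not_le.mpr hpos)) hle
  refine ⟨heq, ⟨_, _, lpFeasible_indicator G hSne hSind, fun i => ⟨?_, ?_⟩, hSval.trans heq.symm⟩,
    ⟨S, hSne, hSind, by rw [hSv, heq]⟩⟩ <;> split_ifs <;> simp
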